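/- arXiv:2407.20809 — 2 statements merged into one kernel-verified Lean document; each statement's English description precedes it below -/
import Mathlib

section
/- Let (M,g) complete Riemannian, Ω ⊂ M smooth bounded domain, φ₀ a normalized eigenfunction of the Neumann problem −Δφ₀ + φ₀ = λ₀φ₀ in Ω with ∂φ₀/∂ν = 0. For ε > 0 let V_ε ∈ H¹(Ω) be the unique solution of ∫_Ω(g(∇V_ε,∇u) + V_ε u)dv + ε∫_{∂Ω}V_ε u da = ε∫_{∂Ω}φ₀ u da for all u ∈ H¹(Ω). Then ‖V_ε‖²_{H¹(Ω)} ≤ ε‖φ₀‖_{L²(∂Ω)}‖V_ε‖_{L²(∂Ω)}, and consequently ‖V_ε‖_{H¹(Ω)} = O(ε) as ε → 0 (using the trace inequality ∫_{∂Ω}u² ≤ C₀∫_Ω(|∇u|² + u²)). -/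
open Filter Topology RealInnerProductSpace

lemma bilin_cauchy_schwarz {X : Type*} [NormedAddCommGroup X] [InnerProductSpace ℝ X]
    (b : X →ₗ[ℝ] X →ₗ[ℝ] ℝ) (hb_symm : ∀ u v, b u v = b v u)
    (hb_nonneg : ∀ u, 0 ≤ b u u) (u v : X) :
    b u v ≤ Real.sqrt (b u u) * Real.sqrt (b v v) := by
  have hq : ∀ t : ℝ, 0 ≤ b v v * (t * t) + (2 * b u v) * t + b u u := by
    intro t
    have h := hb_nonneg (u + t • v)
    simp only [map_add, map_smul, LinearMap.add_apply, LinearMap.smul_apply, smul_eq_mul] at h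
    rw [hb_symm v u] at h
    ring_nf at h ⊢
    linarith
  have hdisc := discrim_le_zero hq
  have hsq : (b u v) ^ 2 ≤ b u u * b v v := by
    unfold discrim at hdisc; nlinarith
  calc b u v ≤ |b u v| := le_abs_self _
    _ = Real.sqrt ((b u v) ^ 2) := (Real.sqrt_sq_eq_abs _).symm
    _ ≤ Real.sqrt (b u u * b v v) := Real.sqrt_le_sqrt hsq
    _ = Real.sqrt (b u u) * Real.sqrt (b v v) := Real.sqrt_mul (hb_nonneg u) _

/-- **energy estimate for the Robin potential.** Let `(M,g)` be a
complete Riemannian manifold, `Ω ⊂ M` a smooth bounded domain.  We model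
`L²(Ω)` by the Hilbert space `X`, `H¹(Ω)` by the subspace `F`, the full `H¹`
form `a(u,v) = ∫_Ω (g(∇u,∇v) + uv) dv` and the boundary form
`b(u,v) = ∫_{∂Ω} uv da` by nonnegative symmetric bilinear forms, with the trace
inequality `b(u,u) ≤ C₀ a(u,u)` on `F`.  Let `φ₀ ∈ F` be a normalized
eigenfunction of the Neumann problem `a(φ₀, v) = λ₀ ⟪φ₀, v⟫_{L²}`, and for
`ε > 0` let `V_ε ∈ F` be the unique solution of
`a(V_ε, u) + ε b(V_ε, u) = ε b(φ₀, u)` for all `u ∈ F`.  Then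
`‖V_ε‖²_{H¹} = a(V_ε,V_ε) ≤ ε ‖φ₀‖_{L²(∂Ω)} ‖V_ε‖_{L²(∂Ω)}`, and consequently
`‖V_ε‖_{H¹(Ω)} = O(ε)` as `ε → 0`. -/
theorem robin_potential_estimate
    {X : Type*} [NormedAddCommGroup X] [InnerProductSpace ℝ X] [CompleteSpace X]
    (F : Submodule ℝ X)
    (a b : X →ₗ[ℝ] X →ₗ[ℝ] ℝ)
    (ha_symm : ∀ u v, a u v = a v u) (hb_symm : ∀ u v, b u v = b v u)
    (ha_nonneg : ∀ u, 0 ≤ a u u) (hb_nonneg : ∀ u, 0 ≤ b u u)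
    (C₀ : ℝ) (hC₀ : 0 < C₀)
    -- trace inequality `∫_{∂Ω} u² da ≤ C₀ ∫_Ω (|∇u|² + u²) dv`
    (htrace : ∀ u ∈ F, b u u ≤ C₀ * a u u)
    (lam0 : ℝ) (φ₀ : X) (hφ₀F : φ₀ ∈ F) (hφ₀norm : ‖φ₀‖ = 1)
    (hφ₀eig : ∀ v ∈ F, a φ₀ v = lam0 * ⟪φ₀, v⟫)
    (V : ℝ → X)
    (hV : ∀ ε : ℝ, 0 < ε → V ε ∈ F ∧
      ∀ u ∈ F, a (V ε) u + ε * b (V ε) u = ε * b φ₀ u) :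
    (∀ ε : ℝ, 0 < ε →
      a (V ε) (V ε) ≤
        ε * Real.sqrt (b φ₀ φ₀) * Real.sqrt (b (V ε) (V ε))) ∧
    ∃ K : ℝ, ∀ ε : ℝ, 0 < ε → Real.sqrt (a (V ε) (V ε)) ≤ K * ε := by
  have main : ∀ ε : ℝ, 0 < ε →
      a (V ε) (V ε) ≤ ε * Real.sqrt (b φ₀ φ₀) * Real.sqrt (b (V ε) (V ε)) := by
    intro ε hε
    obtain ⟨hVF, hVeq⟩ := hV ε hε
    have heq := hVeq (V ε) hVF
    have hcs := bilin_cauchy_schwarz b hb_symm hb_nonneg φ₀ (V ε)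
    have hbnn := hb_nonneg (V ε)
    nlinarith [mul_le_mul_of_nonneg_left hcs hε.le]
  refine ⟨main, ⟨Real.sqrt C₀ * Real.sqrt (b φ₀ φ₀), ?_⟩⟩
  intro ε hε
  obtain ⟨hVF, hVeq⟩ := hV ε hε
  have h1 := main ε hε
  have h2 := htrace (V ε) hVF
  -- √(b V V) ≤ C₀ ε √(b φ₀ φ₀)
  have hbφ := hb_nonneg φ₀
  have hbV := hb_nonneg (V ε)
  have haV := ha_nonneg (V ε)
  have hsV : Real.sqrt (b (V ε) (V ε)) ^ 2 = b (V ε) (V ε) := Real.sq_sqrt hbV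
  have hsφ : Real.sqrt (b φ₀ φ₀) ^ 2 = b φ₀ φ₀ := Real.sq_sqrt hbφ
  have hbound : Real.sqrt (b (V ε) (V ε)) ≤ C₀ * ε * Real.sqrt (b φ₀ φ₀) := by
    have : Real.sqrt (b (V ε) (V ε)) ^ 2 ≤
        (C₀ * ε * Real.sqrt (b φ₀ φ₀)) * Real.sqrt (b (V ε) (V ε)) := by
      rw [hsV]
      calc b (V ε) (V ε) ≤ C₀ * a (V ε) (V ε) := h2
        _ ≤ C₀ * (ε * Real.sqrt (b φ₀ φ₀) * Real.sqrt (b (V ε) (V ε))) :=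
            mul_le_mul_of_nonneg_left h1 hC₀.le
        _ = (C₀ * ε * Real.sqrt (b φ₀ φ₀)) * Real.sqrt (b (V ε) (V ε)) := by ring
    rcases eq_or_lt_of_le (Real.sqrt_nonneg (b (V ε) (V ε))) with h | h
    · rw [← h]; positivity
    · nlinarith
  have haVbound : a (V ε) (V ε) ≤ C₀ * ε ^ 2 * b φ₀ φ₀ := by
    calc a (V ε) (V ε) ≤ ε * Real.sqrt (b φ₀ φ₀) * Real.sqrt (b (V ε) (V ε)) := h1
      _ ≤ ε * Real.sqrt (b φ₀ φ₀) * (C₀ * ε * Real.sqrt (b φ₀ φ₀)) := by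
          apply mul_le_mul_of_nonneg_left hbound; positivity
      _ = C₀ * ε ^ 2 * Real.sqrt (b φ₀ φ₀) ^ 2 := by ring
      _ = C₀ * ε ^ 2 * b φ₀ φ₀ := by rw [hsφ]
  calc Real.sqrt (a (V ε) (V ε)) ≤ Real.sqrt (C₀ * ε ^ 2 * b φ₀ φ₀) :=
        Real.sqrt_le_sqrt haVbound
    _ = Real.sqrt C₀ * Real.sqrt (b φ₀ φ₀) * ε := by
        rw [show C₀ * ε ^ 2 * b φ₀ φ₀ = (C₀ * b φ₀ φ₀) * ε ^ 2 by ring,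
          Real.sqrt_mul (by positivity), Real.sqrt_sq hε.le,
          Real.sqrt_mul hC₀.le]
end

section
/- In the conformal deformation setting, let λ₀ be a simple Dirichlet eigenvalue of (Ω, g₀) with normalized eigenfunction φ₀, and let V_ε be the minimizer of J_ε(u) = ½∫_Ω e^{(n−2)Φ_ε}|∇u|²dv − (∫_Ω e^{(n−2)Φ_ε}g(∇φ₀,∇u)dv − ∫_Ω g(∇φ₀,∇u)dv) on H¹₀(Ω). Then ‖V_ε‖_{L²(Ω, dv_ε)} = O(‖Φ_ε‖_{L^∞(Ω)}) as ε → 0. -/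
open Filter Topology MeasureTheory

private lemma aux_sq_le (x y : ℝ) (hy : 0 ≤ y) (h : x^2 ≤ y^2) (hx : 0 ≤ x) : x ≤ y := by
  nlinarith

private lemma aux_arith (t E m a b H : ℝ) (ht : 0 ≤ t) (hE : |E| ≤ 2*t)
    (hm : m^2 ≤ a*b) (hb : b ≤ 3*H) (ha : 0 ≤ a) (hH : 0 ≤ H) :
    |E * m| ≤ 6*t^2*a + H/2 := by
  have hE2 : E^2 ≤ 4*t^2 := by nlinarith [sq_abs E, abs_nonneg E]
  have h1 : (E*m)^2 ≤ 4*t^2*(a*b) := by nlinarith [sq_nonneg m, sq_nonneg E]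
  have h2 : (E*m)^2 ≤ 12*t^2*(a*H) := by
    nlinarith [mul_nonneg (by positivity : (0:ℝ) ≤ 4*t^2) ha]
  have hd : 0 ≤ 6*t^2*a + H/2 := by positivity
  refine aux_sq_le _ _ hd ?_ (abs_nonneg _)
  nlinarith [sq_abs (E*m), sq_nonneg (6*t^2*a - H/2)]

/-- **L² estimate for the conformal potential.** Let `(M,g)` be a
complete Riemannian manifold of dimension `n ≥ 2`, `Ω` a compact domain and
`g_ε = e^{2Φ_ε}g` with `Φ_ε → 0` uniformly.  We model `Ω` by a measure space,
`H¹₀(Ω)` by the subspace `F` of functions `Ω → ℝ`, and the pointwise Riemannian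
gradient pairing `g(∇u,∇v)` by a pointwise bilinear, symmetric, positive map
`gradIn`.  Let `λ₀` be a simple Dirichlet eigenvalue of `(Ω, g₀)` with
normalized eigenfunction `φ₀`, and let `V_ε` be the minimizer of
`J_ε(u) = ½∫_Ω e^{(n−2)Φ_ε}|∇u|²dv − (∫_Ω e^{(n−2)Φ_ε}g(∇φ₀,∇u)dv − ∫_Ω g(∇φ₀,∇u)dv)`
on `H¹₀(Ω)`, i.e. the solution of
`∫_Ω e^{(n−2)Φ_ε}g(∇V_ε,∇u)dv = ∫_Ω(e^{(n−2)Φ_ε} − 1)g(∇φ₀,∇u)dv` for all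
`u ∈ H¹₀(Ω)`.  Then `‖V_ε‖_{L²(Ω,dv_ε)} = O(‖Φ_ε‖_{L^∞(Ω)})` as `ε → 0`. -/
theorem conformal_potential_L2_estimate
    {Ω : Type*} [Nonempty Ω] [MeasurableSpace Ω] (μ : Measure Ω)
    (n : ℕ) (hn : 2 ≤ n)
    (F : Submodule ℝ (Ω → ℝ))
    (gradIn : (Ω → ℝ) → (Ω → ℝ) → Ω → ℝ)
    (hsymm : ∀ u v x, gradIn u v x = gradIn v u x)
    (hadd : ∀ u v w x, gradIn (u + v) w x = gradIn u w x + gradIn v w x)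
    (hsmul : ∀ (c : ℝ) u v x, gradIn (c • u) v x = c * gradIn u v x)
    (hpos : ∀ u x, 0 ≤ gradIn u u x)
    (Φ : ℝ → Ω → ℝ) (hΦ0 : Φ 0 = 0)
    (hΦbd : ∃ M : ℝ, ∀ ε x, |Φ ε x| ≤ M)
    (hΦunif : ∀ δ > 0, ∃ ε₀ > 0, ∀ ε : ℝ, |ε| < ε₀ → ∀ x, |Φ ε x| < δ)
    -- Poincaré inequality (uniform lower bound on the first eigenvalue of `g_ε`)
    (c₀ : ℝ) (hc₀ : 0 < c₀)
    (hPoin : ∃ ε₁ > 0, ∀ ε : ℝ, |ε| < ε₁ → ∀ u ∈ F,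
      c₀ * ∫ x, Real.exp ((n : ℝ) * Φ ε x) * (u x) ^ 2 ∂μ ≤
        ∫ x, Real.exp (((n : ℝ) - 2) * Φ ε x) * gradIn u u x ∂μ)
    -- `λ₀` is a simple eigenvalue of `(Ω, g₀)` with normalized eigenfunction `φ₀`
    (lam0 : ℝ) (φ₀ : Ω → ℝ) (hφ₀F : φ₀ ∈ F)
    (hφ₀norm : ∫ x, (φ₀ x) ^ 2 ∂μ = 1)
    (hφ₀eig : ∀ u ∈ F, ∫ x, gradIn φ₀ u x ∂μ = lam0 * ∫ x, φ₀ x * u x ∂μ)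
    (hsimple : ∀ ψ ∈ F,
      (∀ u ∈ F, ∫ x, gradIn ψ u x ∂μ = lam0 * ∫ x, ψ x * u x ∂μ) →
      ∃ c : ℝ, ψ = c • φ₀)
    -- `V_ε` minimizes `J_ε`, equivalently solves its Euler equation
    (V : ℝ → Ω → ℝ)
    (hV : ∀ ε : ℝ, 0 < ε → V ε ∈ F ∧
      ∀ u ∈ F,
        ∫ x, Real.exp (((n : ℝ) - 2) * Φ ε x) * gradIn (V ε) u x ∂μ =
        ∫ x, (Real.exp (((n : ℝ) - 2) * Φ ε x) - 1) * gradIn φ₀ u x ∂μ) :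
    ∃ C : ℝ, ∃ ε₀ > 0, ∀ ε : ℝ, 0 < ε → ε < ε₀ →
      Real.sqrt (∫ x, Real.exp ((n : ℝ) * Φ ε x) * (V ε x) ^ 2 ∂μ) ≤
        C * ⨆ x, |Φ ε x| := by
  obtain ⟨M, hM⟩ := hΦbd
  obtain ⟨ε₁, hε₁, hP⟩ := hPoin
  have hn2 : (2:ℝ) ≤ (n:ℝ) := by exact_mod_cast hn
  have hnpos : (0:ℝ) < (n:ℝ) := by linarith
  obtain ⟨ε₂, hε₂, hU⟩ := hΦunif ((1:ℝ)/n) (by positivity)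
  -- λ₀ = ∫ g(∇φ₀,∇φ₀) ≥ c₀ > 0, and the energy density of φ₀ is integrable
  have hP0 := hP 0 (by simpa using hε₁) φ₀ hφ₀F
  simp only [hΦ0, Pi.zero_apply, mul_zero, Real.exp_zero, one_mul] at hP0
  rw [hφ₀norm, mul_one] at hP0
  -- hP0 : c₀ ≤ ∫ gradIn φ₀ φ₀
  have hlam : ∫ x, gradIn φ₀ φ₀ x ∂μ = lam0 := by
    have h := hφ₀eig φ₀ hφ₀F
    have : (∫ x, φ₀ x * φ₀ x ∂μ) = 1 := by
      rw [← hφ₀norm]; congr 1; funext x; ring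
    rw [this, mul_one] at h; exact h
  have hlam0 : c₀ ≤ lam0 := hlam ▸ hP0
  have hg00int : Integrable (fun x => gradIn φ₀ φ₀ x) μ := by
    by_contra h
    rw [integral_undef h] at hlam
    linarith
  refine ⟨Real.sqrt (12 * (n:ℝ)^2 * lam0 / c₀), min ε₁ ε₂, lt_min hε₁ hε₂, ?_⟩
  intro ε hε hεlt
  have hεa : |ε| = ε := abs_of_pos hε
  have hε1' : |ε| < ε₁ := by rw [hεa]; exact lt_of_lt_of_le hεlt (min_le_left _ _)
  have hε2' : |ε| < ε₂ := by rw [hεa]; exact lt_of_lt_of_le hεlt (min_le_right _ _)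
  obtain ⟨hVF, hVeq⟩ := hV ε hε
  set δ : ℝ := ⨆ x, |Φ ε x| with hδdef
  have hbdd : BddAbove (Set.range fun x => |Φ ε x|) := ⟨M, by rintro _ ⟨x, rfl⟩; exact hM ε x⟩
  have hδle : ∀ x, |Φ ε x| ≤ δ := fun x => le_ciSup hbdd x
  have hδ0 : 0 ≤ δ := le_trans (abs_nonneg _) (hδle (Classical.arbitrary Ω))
  set X : ℝ := ∫ x, Real.exp ((n : ℝ) * Φ ε x) * (V ε x) ^ 2 ∂μ with hXdef
  set A : ℝ := ∫ x, Real.exp (((n : ℝ) - 2) * Φ ε x) * gradIn (V ε) (V ε) x ∂μ with hAdef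
  have hX0 : 0 ≤ X := integral_nonneg fun x => by positivity
  have hXA : c₀ * X ≤ A := hP ε hε1' (V ε) hVF
  have hAB : A = ∫ x, (Real.exp (((n : ℝ) - 2) * Φ ε x) - 1) * gradIn φ₀ (V ε) x ∂μ :=
    hVeq (V ε) hVF
  -- pointwise Cauchy–Schwarz for the bilinear form
  have hCS : ∀ x, (gradIn φ₀ (V ε) x)^2 ≤ gradIn φ₀ φ₀ x * gradIn (V ε) (V ε) x := by
    intro x
    have hq : ∀ s : ℝ, 0 ≤ (gradIn φ₀ φ₀ x) * (s * s) + (2 * gradIn φ₀ (V ε) x) * s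
        + gradIn (V ε) (V ε) x := by
      intro s
      have h0 := hpos (V ε + s • φ₀) x
      have e1 : gradIn (V ε + s • φ₀) (V ε + s • φ₀) x
          = gradIn (V ε) (V ε) x + 2*s*gradIn φ₀ (V ε) x + s^2 * gradIn φ₀ φ₀ x := by
        rw [hadd, hsmul, hsymm (V ε) (V ε + s • φ₀), hadd, hsmul,
          hsymm φ₀ (V ε + s • φ₀), hadd, hsmul, hsymm (V ε) φ₀]
        ring
      rw [e1] at h0
      nlinarith [h0]
    have hd := discrim_le_zero hq
    rw [discrim] at hd
    nlinarith [hd]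
  -- the pointwise bound on the right-hand side integrand
  set f : Ω → ℝ := fun x => (Real.exp (((n : ℝ) - 2) * Φ ε x) - 1) * gradIn φ₀ (V ε) x with hfdef
  set h1 : Ω → ℝ := fun x => Real.exp (((n : ℝ) - 2) * Φ ε x) * gradIn (V ε) (V ε) x with hh1def
  have hpt : ∀ x, |f x| ≤ 6*((n:ℝ)*δ)^2 * gradIn φ₀ φ₀ x + (1/2) * h1 x := by
    intro x
    have hΦx : |Φ ε x| < 1/(n:ℝ) := hU ε hε2' x
    have hΦδ : |Φ ε x| ≤ δ := hδle x
    have hnn : (0:ℝ) ≤ (n:ℝ) - 2 := by linarith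
    have hρabs : |(((n:ℝ) - 2) * Φ ε x)| ≤ 1 := by
      rw [abs_mul, abs_of_nonneg hnn]
      calc ((n:ℝ) - 2) * |Φ ε x| ≤ ((n:ℝ) - 2) * (1/(n:ℝ)) :=
            mul_le_mul_of_nonneg_left hΦx.le hnn
        _ ≤ 1 := by
            rw [div_eq_inv_mul, mul_one, ← div_eq_mul_inv, div_le_one hnpos]; linarith
    have hE : |Real.exp (((n:ℝ) - 2) * Φ ε x) - 1| ≤ 2 * ((n:ℝ) * δ) := by
      refine le_trans (Real.abs_exp_sub_one_le hρabs) ?_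
      rw [abs_mul, abs_of_nonneg hnn]
      have h1' : ((n:ℝ) - 2) * |Φ ε x| ≤ (n:ℝ) * δ := by
        have := abs_nonneg (Φ ε x)
        nlinarith
      linarith
    have hbH : gradIn (V ε) (V ε) x ≤ 3 * h1 x := by
      have hexp : Real.exp (-1 : ℝ) ≤ Real.exp (((n:ℝ) - 2) * Φ ε x) :=
        Real.exp_le_exp.mpr (by cases abs_le.mp hρabs; linarith)
      have hexp3 : Real.exp (1:ℝ) ≤ 3 :=
        le_of_lt (lt_trans Real.exp_one_lt_d9 (by norm_num))
      have h3 : (1:ℝ)/3 ≤ Real.exp (-1 : ℝ) := by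
        rw [Real.exp_neg, one_div]
        exact inv_anti₀ (Real.exp_pos 1) hexp3
      have hb0 := hpos (V ε) x
      have hkey : (1:ℝ)/3 * gradIn (V ε) (V ε) x ≤ h1 x := by
        have := mul_le_mul_of_nonneg_right (le_trans h3 hexp) hb0
        simpa [hh1def] using this
      linarith
    have hH0 : 0 ≤ h1 x := by
      rw [hh1def]
      exact mul_nonneg (Real.exp_nonneg _) (hpos _ x)
    have h := aux_arith ((n:ℝ)*δ) _ _ _ _ _ (mul_nonneg (Nat.cast_nonneg n) hδ0)
      hE (hCS x) hbH (hpos φ₀ x) hH0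
    have hfx : f x = (Real.exp (((n : ℝ) - 2) * Φ ε x) - 1) * gradIn φ₀ (V ε) x := rfl
    rw [hfx]
    linarith [h]
  -- main estimate on A
  have hA_le : A ≤ 12*((n:ℝ)*δ)^2 * lam0 := by
    have hR0 : 0 ≤ 12*((n:ℝ)*δ)^2 * lam0 := by
      have : (0:ℝ) ≤ lam0 := le_trans hc₀.le hlam0
      positivity
    by_cases hfi : Integrable f μ
    · by_cases hh1i : Integrable h1 μ
      · have hbint : Integrable (fun x => 6*((n:ℝ)*δ)^2 * gradIn φ₀ φ₀ x + (1/2) * h1 x) μ :=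
          (hg00int.const_mul _).add (hh1i.const_mul _)
        have step1 : A ≤ ∫ x, |f x| ∂μ := by
          rw [hAB]
          refine le_trans (le_abs_self _) ?_
          have := norm_integral_le_integral_norm (μ := μ) f
          simpa [Real.norm_eq_abs] using this
        have step2 : (∫ x, |f x| ∂μ) ≤ ∫ x, 6*((n:ℝ)*δ)^2 * gradIn φ₀ φ₀ x + (1/2) * h1 x ∂μ :=
          integral_mono hfi.abs hbint (fun x => hpt x)
        have step3 : (∫ x, 6*((n:ℝ)*δ)^2 * gradIn φ₀ φ₀ x + (1/2) * h1 x ∂μ)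
            = 6*((n:ℝ)*δ)^2 * lam0 + (1/2) * A := by
          rw [integral_add (hg00int.const_mul _) (hh1i.const_mul _),
            integral_const_mul, integral_const_mul, hlam]
        rw [step3] at step2
        have := le_trans step1 step2
        linarith
      · have : A = 0 := by
          rw [hAdef]
          exact integral_undef (by simpa [hh1def] using hh1i)
        linarith
    · have : A = 0 := by rw [hAB]; exact integral_undef hfi
      linarith
  -- conclude
  have hXle : X ≤ Real.sqrt (12 * (n:ℝ)^2 * lam0 / c₀) ^ 2 * δ ^ 2 := by
    have hsq : Real.sqrt (12 * (n:ℝ)^2 * lam0 / c₀) ^ 2 = 12 * (n:ℝ)^2 * lam0 / c₀ := by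
      refine Real.sq_sqrt ?_
      have : (0:ℝ) ≤ lam0 := le_trans hc₀.le hlam0
      positivity
    rw [hsq]
    rw [div_mul_eq_mul_div, le_div_iff₀ hc₀]
    calc X * c₀ = c₀ * X := by ring
      _ ≤ A := hXA
      _ ≤ 12*((n:ℝ)*δ)^2 * lam0 := hA_le
      _ = 12 * (n:ℝ)^2 * lam0 * δ^2 := by ring
  calc Real.sqrt X ≤ Real.sqrt (Real.sqrt (12 * (n:ℝ)^2 * lam0 / c₀) ^ 2 * δ ^ 2) :=
        Real.sqrt_le_sqrt hXle
    _ = Real.sqrt ((Real.sqrt (12 * (n:ℝ)^2 * lam0 / c₀) * δ) ^ 2) := by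
        congr 1; ring
    _ = Real.sqrt (12 * (n:ℝ)^2 * lam0 / c₀) * δ :=
        Real.sqrt_sq (mul_nonneg (Real.sqrt_nonneg _) hδ0)
end
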